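/- arXiv:2105.07457 — 2 statements merged into one kernel-verified Lean document; each statement's English description precedes it below -/
import Mathlib

section
/- If g : M → L is a dense frame homomorphism, M is a regular frame and L is a compact frame, then g is injective. -/
/-- The well-inside relation of a frame: `b` is well inside `a` iff `bᶜ ⊔ a = ⊤`. -/
def WellInside {L : Type*} [Order.Frame L] (b a : L) : Prop := bᶜ ⊔ a = ⊤

/-- A frame is regular if every element is the join of the elements well inside it. -/
def IsRegularFrame (L : Type*) [Order.Frame L] : Prop :=
  ∀ a : L, a = sSup {b | WellInside b a}

/-- A frame is compact if `⊤` is a compact element. -/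
def IsCompactFrame (L : Type*) [Order.Frame L] : Prop :=
  ∀ S : Set L, ⊤ ≤ sSup S → ∃ T : Set L, T ⊆ S ∧ T.Finite ∧ ⊤ ≤ sSup T

/-! A dense `g` from a regular frame to a compact frame is codense: if `g x = ⊤`, then, since the
elements well inside `x` form a directed set with join `x`, compactness gives one `u ≺ x` with
`g u = ⊤`; then `g uᶜ = ⊥`, so `uᶜ = ⊥` by density, and `uᶜ ⊔ x = ⊤` forces `x = ⊤`.
Codensity lets `g` reflect order: if `g a ≤ g b` and `c ≺ a`, then `g (cᶜ ⊔ b) = ⊤`, so `c ≺ b`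
and `c ≤ b`; by regularity `a`, the join of such `c`, lies below `b`. -/

section WellInside

variable {L : Type*} [Order.Frame L] {a b c : L}

lemma WellInside.le (h : WellInside b a) : b ≤ a :=
  disjoint_compl_right.le_of_codisjoint (codisjoint_iff.2 h)

lemma wellInside_bot (a : L) : WellInside ⊥ a := by
  simp [WellInside]

lemma WellInside.sup (hb : WellInside b a) (hc : WellInside c a) : WellInside (b ⊔ c) a := by
  unfold WellInside at *
  rw [compl_sup, sup_inf_right, hb, hc, inf_top_eq]

lemma directedOn_wellInside (a : L) : DirectedOn (· ≤ ·) {b | WellInside b a} :=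
  fun b hb c hc => ⟨b ⊔ c, hb.sup hc, le_sup_left, le_sup_right⟩

lemma WellInside.eq_top_of_compl_eq_bot (h : WellInside b a) (hb : bᶜ = ⊥) : a = ⊤ := by
  rwa [WellInside, hb, bot_sup_eq] at h

end WellInside

lemma IsCompactFrame.isCompactElement_top {L : Type*} [Order.Frame L] (h : IsCompactFrame L) :
    IsCompactElement (⊤ : L) := by
  refine (CompleteLattice.isCompactElement_iff_exists_le_sSup_of_le_sSup L ⊤).2 fun S hS => ?_
  obtain ⟨T, hTS, hT, htop⟩ := h S hS
  exact ⟨hT.toFinset, by simpa using hTS, by simpa [Finset.sup_id_eq_sSup] using htop⟩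

namespace FrameHom

variable {M L : Type*} [Order.Frame M] [Order.Frame L] (g : FrameHom M L)

lemma compl_eq_bot_of_map_eq_top (hdense : ∀ a : M, g a = ⊥ → a = ⊥) {u : M} (hu : g u = ⊤) :
    uᶜ = ⊥ :=
  hdense _ <| by rw [← inf_top_eq (g uᶜ), ← hu, ← map_inf, compl_inf_self, map_bot]

lemma eq_top_of_map_eq_top (hdense : ∀ a : M, g a = ⊥ → a = ⊥) (hreg : IsRegularFrame M)
    (hcomp : IsCompactFrame L) {x : M} (hx : g x = ⊤) : x = ⊤ := by
  have hsSup : ⊤ ≤ sSup (g '' {b | WellInside b x}) := by rw [← map_sSup, ← hreg x, hx]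
  obtain ⟨_, ⟨u, hux, rfl⟩, hgu⟩ :=
    (CompleteLattice.isCompactElement_iff_le_of_directed_sSup_le L ⊤).1
      hcomp.isCompactElement_top _ (Set.Nonempty.image g ⟨⊥, wellInside_bot x⟩)
      ((directedOn_wellInside x).mono_comp fun _ _ h => OrderHomClass.mono g h) hsSup
  exact hux.eq_top_of_compl_eq_bot (g.compl_eq_bot_of_map_eq_top hdense (top_le_iff.1 hgu))

lemma wellInside_of_map_le (hcodense : ∀ x : M, g x = ⊤ → x = ⊤) {a b c : M}
    (hc : WellInside c a) (hab : g a ≤ g b) : WellInside c b :=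
  hcodense _ <| top_le_iff.1 <| calc
    ⊤ = g (cᶜ ⊔ a) := by rw [hc, map_top]
    _ ≤ g (cᶜ ⊔ b) := by simpa only [map_sup] using sup_le_sup_left hab _

lemma le_of_map_le (hreg : IsRegularFrame M) (hcodense : ∀ x : M, g x = ⊤ → x = ⊤) {a b : M}
    (hab : g a ≤ g b) : a ≤ b := by
  rw [hreg a]
  exact sSup_le fun c hc => (g.wellInside_of_map_le hcodense hc hab).le

end FrameHom

/-- A dense frame homomorphism from a regular frame to a compact frame is injective. -/
theorem dense_frameHom_injective
    {M L : Type*} [Order.Frame M] [Order.Frame L] (g : FrameHom M L)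
    (hdense : ∀ a : M, g a = ⊥ → a = ⊥)
    (hreg : IsRegularFrame M) (hcomp : IsCompactFrame L) :
    Function.Injective g := by
  have hcodense : ∀ x : M, g x = ⊤ → x = ⊤ := fun _ =>
    g.eq_top_of_map_eq_top hdense hreg hcomp
  intro a b hab
  exact le_antisymm (g.le_of_map_le hreg hcodense hab.le) (g.le_of_map_le hreg hcodense hab.ge)
end

section
/- Every compactifiable frame is strongly regular: if for a frame L there exist a compact regular frame M and a dense surjective frame homomorphism k : M → L, then every a ∈ L satisfies a = sSup {b | b ≺₀ a}, where ≺₀ is the greatest interpolative relation contained in the well-inside relation ≺ of L. -/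
/-- A binary relation `r` is interpolative if `r x y` implies there is `z`
with `r x z` and `r z y`. -/
def Interpolative {A : Type*} (r : A → A → Prop) : Prop :=
  ∀ x y, r x y → ∃ z, r x z ∧ r z y

/-- The greatest interpolative relation contained in `r`: the union of all
interpolative relations contained in `r`. -/
def gis {A : Type*} (r : A → A → Prop) : A → A → Prop :=
  fun x y => ∃ s : A → A → Prop,
    (∀ a b, s a b → r a b) ∧ Interpolative s ∧ s x y

/-!
In a compact regular frame the well-inside relation interpolates: if `x ≺ y` then
`xᶜ ⊔ ⨆ {c | c ≺ y} = ⊤`, compactness extracts a finite subjoin, and the finite join `z` of the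
`c ≺ y` occurring in it satisfies `x ≺ z ≺ y`. Frame homomorphisms preserve `≺`, so the image of
`≺` under `k`, enlarged to `{(x, y) | x ≤ k x', k y' ≤ y, x' ≺ y'}`, is an interpolative
subrelation of `≺` on `L`, hence lies in `≺₀`. Since `k` is surjective and `M` is regular, every
`a = k a'` is the join of the `k b` with `b ≺ a'`, all of which are `≺₀ a`.
-/

section Relation

variable {A : Type*} {r s : A → A → Prop} {x y : A}

theorem gis_le (h : gis r x y) : r x y := by
  obtain ⟨s, hsr, -, hs⟩ := h
  exact hsr x y hs

theorem Interpolative.gis_of_le (hs : Interpolative s) (hsr : ∀ a b, s a b → r a b)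
    (h : s x y) : gis r x y :=
  ⟨s, hsr, hs, h⟩

end Relation

namespace WellInside

variable {L M F : Type*} [Order.Frame L] [Order.Frame M]

theorem le_s16 {a b : L} (h : WellInside b a) : b ≤ a :=
  himp_eq_top_iff.1 (top_unique (h ▸ compl_sup_le_himp))

theorem mono {a a' b b' : L} (hb : b' ≤ b) (ha : a ≤ a') (h : WellInside b a) :
    WellInside b' a' :=
  top_unique (h ▸ sup_le_sup (compl_le_compl hb) ha)

theorem map [FunLike F M L] [BoundedLatticeHomClass F M L] (f : F) {a b : M}
    (h : WellInside b a) : WellInside (f b) (f a) := by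
  have hcompl : f bᶜ ≤ (f b)ᶜ :=
    le_compl_iff_disjoint_right.2 (disjoint_compl_left.map f)
  refine top_unique ?_
  calc (⊤ : L) = f bᶜ ⊔ f a := by rw [← map_sup, h, map_top]
    _ ≤ (f b)ᶜ ⊔ f a := sup_le_sup_right hcompl _

theorem supClosed_setOf (a : L) : SupClosed {b | WellInside b a} := by
  intro b hb c hc
  simp only [Set.mem_ofPred_eq, WellInside] at hb hc ⊢
  rw [compl_sup, sup_inf_right, hb, hc, inf_top_eq]

theorem bot (a : L) : WellInside ⊥ a := by
  simp [WellInside]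

theorem sSup_of_finite {a : L} {S : Set L} (hS : S.Finite) (h : ∀ b ∈ S, WellInside b a) :
    WellInside (sSup S) a :=
  (supClosed_setOf a).sSup_mem hS (bot a) h

end WellInside

theorem IsCompactFrame.interpolative_wellInside {M : Type*} [Order.Frame M]
    (hMc : IsCompactFrame M) (hMr : IsRegularFrame M) : Interpolative (WellInside (L := M)) := by
  intro x y hxy
  set S : Set M := {c | WellInside c y}
  have htop : ⊤ ≤ sSup (insert xᶜ S) := by
    rw [sSup_insert, ← hMr y, hxy]
  obtain ⟨T, hTS, hT, hTtop⟩ := hMc _ htop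
  refine ⟨sSup (T ∩ S), top_unique (hTtop.trans (sSup_le fun t ht => ?_)),
    WellInside.sSup_of_finite (hT.inter_of_left S) fun c hc => hc.2⟩
  rcases hTS ht with rfl | htS
  · exact le_sup_left
  · exact (le_sSup (Set.mem_inter ht htS)).trans le_sup_right

theorem gis_wellInside_map {L M F : Type*} [Order.Frame L] [Order.Frame M] [FunLike F M L]
    [BoundedLatticeHomClass F M L] (f : F) (hM : Interpolative (WellInside (L := M))) {a b : M}
    (h : WellInside b a) : gis WellInside (f b) (f a) := by
  let s : L → L → Prop := fun x y => ∃ x' y', WellInside x' y' ∧ x ≤ f x' ∧ f y' ≤ y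
  have hs : Interpolative s := by
    rintro x y ⟨x', y', hxy', hx, hy⟩
    obtain ⟨z, hxz, hzy⟩ := hM x' y' hxy'
    exact ⟨f z, ⟨x', z, hxz, hx, le_rfl⟩, ⟨z, y', hzy, le_rfl, hy⟩⟩
  refine hs.gis_of_le ?_ ⟨b, a, h, le_rfl, le_rfl⟩
  rintro x y ⟨x', y', hxy', hx, hy⟩
  exact (hxy'.map f).mono hx hy

theorem compactifiable_stronglyRegular_general
    {L M : Type*} [Order.Frame L] [Order.Frame M]
    (hMc : IsCompactFrame M) (hMr : IsRegularFrame M)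
    (k : FrameHom M L)
    (hsurj : Function.Surjective k) :
    ∀ a : L, a = sSup {b | gis WellInside b a} := by
  intro a
  obtain ⟨a', rfl⟩ := hsurj a
  refine le_antisymm ?_ (sSup_le fun b hb => (gis_le hb).le_s16)
  calc k a' = sSup (k '' {b | WellInside b a'}) := by rw [← map_sSup, ← hMr a']
    _ ≤ sSup {b | gis WellInside b (k a')} := sSup_le_sSup <| by
      rintro _ ⟨b, hb, rfl⟩
      exact gis_wellInside_map k (hMc.interpolative_wellInside hMr) hb

/-- Every compactifiable frame is strongly regular. -/
theorem compactifiable_stronglyRegular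
    {L M : Type*} [Order.Frame L] [Order.Frame M]
    (hMc : IsCompactFrame M) (hMr : IsRegularFrame M)
    (k : FrameHom M L) (hdense : ∀ a : M, k a = ⊥ → a = ⊥)
    (hsurj : Function.Surjective k) :
    ∀ a : L, a = sSup {b | gis WellInside b a} :=
  compactifiable_stronglyRegular_general hMc hMr k hsurj
end
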